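/- For every graph G, χ_{μ_i}(G) ≤ χ(G)·χ_μ(G), and this bound is attained by complete graphs. -/

import Mathlib

open SimpleGraph

variable {V W : Type*}

/-- Two vertices of `X` are `X`-visible if some geodesic between them has all
internal vertices outside `X`; `X` is a mutual-visibility set if this holds
for every reachable pair of vertices of `X`. -/
def IsMVSet (G : SimpleGraph V) (X : Set V) : Prop :=
  ∀ x ∈ X, ∀ y ∈ X, x ≠ y → G.Reachable x y →
    ∃ p : G.Walk x y, p.length = G.dist x y ∧
      ∀ z ∈ p.support, z ≠ x → z ≠ y → z ∉ X

/-- An independent mutual-visibility set. -/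
def IsIMVSet (G : SimpleGraph V) (X : Set V) : Prop :=
  (∀ x ∈ X, ∀ y ∈ X, ¬ G.Adj x y) ∧ IsMVSet G X

/-- The mutual-visibility chromatic number: the least `k` such that the vertex
set partitions into `k` mutual-visibility sets. -/
noncomputable def mvChrom (G : SimpleGraph V) : ℕ :=
  sInf {k | ∃ f : V → Fin k, ∀ i, IsMVSet G (f ⁻¹' {i})}

/-- The independent mutual-visibility chromatic number. -/
noncomputable def imvChrom (G : SimpleGraph V) : ℕ :=
  sInf {k | ∃ f : V → Fin k, ∀ i, IsIMVSet G (f ⁻¹' {i})}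

/-- The chromatic number, as a natural number. -/
noncomputable def chromNat (G : SimpleGraph V) : ℕ :=
  sInf {k | G.Colorable k}

/-- The independent mutual-visibility number `μᵢ(G)`. -/
noncomputable def imvNum (G : SimpleGraph V) : ℕ :=
  sSup {n | ∃ s : Finset V, IsIMVSet G ↑s ∧ s.card = n}

/-- The independence number `α(G)`. -/
noncomputable def indepNum (G : SimpleGraph V) : ℕ :=
  sSup {n | ∃ s : Finset V, (∀ x ∈ s, ∀ y ∈ s, ¬ G.Adj x y) ∧ s.card = n}

/-! If `C` is a proper colouring with `χ(G)` colours and `g` a partition into `χ_μ(G)`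
mutual-visibility sets, then each class of `v ↦ (C v, g v)` is independent (it lies in a colour
class of `C`) and mutual-visibility (it lies in a class of `g`, and subsets of mutual-visibility
sets are mutual-visibility). For `Kₙ` an independent set is a single vertex, so
`χ_{μ_i}(Kₙ) = n`, while `χ(Kₙ) = n` and the whole vertex set is one mutual-visibility set. -/

variable {G : SimpleGraph V}

lemma IsMVSet.mono {X Y : Set V} (hY : IsMVSet G Y) (h : X ⊆ Y) : IsMVSet G X := by
  intro x hx y hy hxy hr
  obtain ⟨p, hp, hint⟩ := hY x (h hx) y (h hy) hxy hr
  exact ⟨p, hp, fun z hz hzx hzy hzX => hint z hz hzx hzy (h hzX)⟩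

lemma isMVSet_of_subsingleton {X : Set V} (h : X.Subsingleton) : IsMVSet G X :=
  fun _ hx _ hy hxy _ => absurd (h hx hy) hxy

lemma SimpleGraph.IsClique.isMVSet {X : Set V} (h : G.IsClique X) : IsMVSet G X := by
  intro x hx y hy hxy _
  have hadj : G.Adj x y := h hx hy hxy
  refine ⟨hadj.toWalk, by simp [dist_eq_one_iff_adj.mpr hadj], fun z hz hzx hzy => ?_⟩
  rcases (by simpa using hz : z = x ∨ z = y) with rfl | rfl
  exacts [absurd rfl hzx, absurd rfl hzy]

lemma isIMVSet_inter {X Y : Set V} (hX : G.IsIndepSet X) (hY : IsMVSet G Y) :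
    IsIMVSet G (X ∩ Y) := by
  refine ⟨fun x hx y hy hadj => ?_, hY.mono Set.inter_subset_right⟩
  exact hX hx.1 hy.1 hadj.ne hadj

lemma isIMVSet_of_subsingleton {X : Set V} (h : X.Subsingleton) : IsIMVSet G X :=
  ⟨fun _ hx _ hy hadj => hadj.ne (h hx hy), isMVSet_of_subsingleton h⟩

section Fintype

variable [Fintype V]

lemma exists_mvColoring : ∃ f : V → Fin (mvChrom G), ∀ i, IsMVSet G (f ⁻¹' {i}) :=
  Nat.sInf_mem (s := {k | ∃ f : V → Fin k, ∀ i, IsMVSet G (f ⁻¹' {i})})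
    ⟨_, Fintype.equivFin V, fun _ => isMVSet_of_subsingleton
       (Set.subsingleton_singleton.preimage (Fintype.equivFin V).injective)⟩

lemma exists_imvColoring : ∃ f : V → Fin (imvChrom G), ∀ i, IsIMVSet G (f ⁻¹' {i}) :=
  Nat.sInf_mem (s := {k | ∃ f : V → Fin k, ∀ i, IsIMVSet G (f ⁻¹' {i})})
    ⟨_, Fintype.equivFin V, fun _ => isIMVSet_of_subsingleton
       (Set.subsingleton_singleton.preimage (Fintype.equivFin V).injective)⟩

lemma colorable_chromNat : G.Colorable (chromNat G) :=
  Nat.sInf_mem (s := {k | G.Colorable k}) ⟨_, G.colorable_of_fintype⟩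

lemma colorable_imvChrom : G.Colorable (imvChrom G) := by
  obtain ⟨f, hf⟩ := exists_imvColoring (G := G)
  exact ⟨Coloring.mk f fun {u v} hadj huv => (hf (f v)).1 u huv v rfl hadj⟩

lemma mvChrom_pos [Nonempty V] : 0 < mvChrom G := by
  obtain ⟨f, -⟩ := exists_mvColoring (G := G)
  exact Fin.pos (f (Classical.arbitrary V))

theorem imvChrom_le_chromNat_mul_mvChrom (G : SimpleGraph V) :
    imvChrom G ≤ chromNat G * mvChrom G := by
  obtain ⟨C⟩ := colorable_chromNat (G := G)
  obtain ⟨g, hg⟩ := exists_mvColoring (G := G)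
  refine Nat.sInf_le ⟨fun v => finProdFinEquiv (C v, g v), fun i => ?_⟩
  have hclass : (fun v => finProdFinEquiv (C v, g v)) ⁻¹' {i} =
      C.colorClass (finProdFinEquiv.symm i).1 ∩ g ⁻¹' {(finProdFinEquiv.symm i).2} := by
    ext v
    simp [← Equiv.eq_symm_apply, Prod.ext_iff, Coloring.colorClass]
  rw [hclass]
  exact isIMVSet_inter (C.isIndepSet_colorClass _) (hg _)

lemma card_le_of_top_colorable {k : ℕ} (h : (⊤ : SimpleGraph V).Colorable k) :
    Fintype.card V ≤ k := by
  simpa using h.card_le_of_pairwise_adj id fun _ _ => (top_adj _ _).mpr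

lemma chromNat_top : chromNat (⊤ : SimpleGraph V) = Fintype.card V :=
  le_antisymm (Nat.sInf_le (colorable_of_fintype _)) (card_le_of_top_colorable colorable_chromNat)

lemma imvChrom_top : imvChrom (⊤ : SimpleGraph V) = Fintype.card V :=
  le_antisymm
    (Nat.sInf_le ⟨Fintype.equivFin V, fun _ => isIMVSet_of_subsingleton
      (Set.subsingleton_singleton.preimage (Fintype.equivFin V).injective)⟩)
    (card_le_of_top_colorable colorable_imvChrom)

lemma mvChrom_top [Nonempty V] : mvChrom (⊤ : SimpleGraph V) = 1 :=
  le_antisymm (Nat.sInf_le ⟨fun _ => 0, fun _ => (IsClique.top _).isMVSet⟩) mvChrom_pos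

end Fintype

theorem stmt10 :
    (∀ (U : Type) [Fintype U] (G : SimpleGraph U), imvChrom G ≤ chromNat G * mvChrom G) ∧
      ∀ n : ℕ, imvChrom (⊤ : SimpleGraph (Fin n)) =
        chromNat (⊤ : SimpleGraph (Fin n)) * mvChrom (⊤ : SimpleGraph (Fin n)) := by
  refine ⟨fun U _ G => imvChrom_le_chromNat_mul_mvChrom G, fun n => ?_⟩
  rcases n.eq_zero_or_pos with rfl | hn
  · simp [imvChrom_top, chromNat_top]
  · have : Nonempty (Fin n) := ⟨⟨0, hn⟩⟩
    rw [imvChrom_top, chromNat_top, mvChrom_top, mul_one]
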